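/- Let F be a non-archimedean local field of characteristic ≠ 2, n ≥ 1, and M an integral O_F-lattice. Then M is n-ADC if and only if for every O_F-maximal lattice N of rank n such that F·M represents F·N, M represents N. -/

import Mathlib

/-
Quadratic lattices over (local and global) fields, following
"On n-ADC integral quadratic lattices over totally real number fields".

A non-archimedean local field of characteristic ≠ 2 is formalized as a field `K`
together with a valuation subring `O` of `K` which is a complete discrete valuation
ring with finite residue field (completeness is expressed as adic completeness with
respect to the maximal ideal); `K` is automatically the fraction field of `O`.
-/

noncomputable section

namespace QLat

variable {K : Type} [Field K]

/-- The bilinear form associated to a quadratic form `Q`, i.e. `B x y = (Q(x+y)-Q(x)-Q(y))/2`,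
so that `B x x = Q x`. -/
def bil {V : Type} [AddCommGroup V] [Module K V] (Q : QuadraticForm K V) (x y : V) : K :=
  (2 : K)⁻¹ * QuadraticMap.polar (⇑Q) x y

/-- A quadratic form (space) is nondegenerate. -/
def Nondeg {V : Type} [AddCommGroup V] [Module K V] (Q : QuadraticForm K V) : Prop :=
  ∀ x : V, (∀ y : V, QuadraticMap.polar (⇑Q) x y = 0) → x = 0

/-- The `O`-span of a subset `t` of a `K`-vector space: all finite `O`-linear
combinations of elements of `t`. -/
def ospan (O : Subring K) {V : Type} [AddCommGroup V] [Module K V] (t : Set V) : Set V :=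
  {x | ∃ (m : ℕ) (c : Fin m → K) (g : Fin m → V),
    (∀ i, c i ∈ O) ∧ (∀ i, g i ∈ t) ∧ x = ∑ i, c i • g i}

/-- An `O`-lattice in `V`: a finitely generated `O`-submodule of `V`. -/
def IsLattice (O : Subring K) {V : Type} [AddCommGroup V] [Module K V] (L : Set V) : Prop :=
  ∃ t : Finset V, L = ospan O (t : Set V)

/-- An `O`-lattice on `V`: a finitely generated `O`-submodule of `V` spanning `V` over `K`. -/
def IsLatticeOn (O : Subring K) {V : Type} [AddCommGroup V] [Module K V] (L : Set V) : Prop :=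
  IsLattice O L ∧ Submodule.span K L = ⊤

/-- The lattice `L` is integral: `𝔫(L) ⊆ O`, i.e. all values of `Q` on `L` lie in `O`. -/
def IsIntegral (O : Subring K) {V : Type} [AddCommGroup V] [Module K V]
    (Q : QuadraticForm K V) (L : Set V) : Prop :=
  ∀ x ∈ L, Q x ∈ O

/-- The quadratic space `(V,Q)` represents the quadratic space `(W,Q')`. -/
def SpaceRep {W V : Type} [AddCommGroup W] [Module K W] [AddCommGroup V] [Module K V]
    (Q' : QuadraticForm K W) (Q : QuadraticForm K V) : Prop :=
  ∃ σ : W →ₗ[K] V, Function.Injective σ ∧ ∀ x, Q (σ x) = Q' x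

/-- The quadratic spaces `(W,Q')` and `(V,Q)` are isometric. -/
def SpaceIsom {W V : Type} [AddCommGroup W] [Module K W] [AddCommGroup V] [Module K V]
    (Q' : QuadraticForm K W) (Q : QuadraticForm K V) : Prop :=
  ∃ σ : W ≃ₗ[K] V, ∀ x, Q (σ x) = Q' x

/-- The lattice `M` (in `(V,Q)`) represents the lattice `N` (a full lattice in `(W,Q')`):
there is an injective form-preserving `K`-linear map carrying `N` into `M`.  (For a full
lattice `N` this is equivalent to the existence of an injective form-preserving
`O`-linear map `N → M`, since `K` is the fraction field of `O`.) -/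
def LatRep {W V : Type} [AddCommGroup W] [Module K W] [AddCommGroup V] [Module K V]
    (Q' : QuadraticForm K W) (Q : QuadraticForm K V) (N : Set W) (M : Set V) : Prop :=
  ∃ σ : W →ₗ[K] V, Function.Injective σ ∧ (∀ x, Q (σ x) = Q' x) ∧ σ '' N ⊆ M

/-- The lattices `N` (full in `(W,Q')`) and `M` (in `(V,Q)`) are isometric. -/
def LatIsom {W V : Type} [AddCommGroup W] [Module K W] [AddCommGroup V] [Module K V]
    (Q' : QuadraticForm K W) (Q : QuadraticForm K V) (N : Set W) (M : Set V) : Prop :=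
  ∃ σ : W →ₗ[K] V, Function.Injective σ ∧ (∀ x, Q (σ x) = Q' x) ∧ σ '' N = M

/-- The lattice `L` is `O`-maximal: it is integral and is not properly contained in any
(finitely generated) lattice on the same subspace with integral norm. -/
def IsMaximal (O : Subring K) {V : Type} [AddCommGroup V] [Module K V]
    (Q : QuadraticForm K V) (L : Set V) : Prop :=
  IsIntegral O Q L ∧
    ∀ L' : Set V, IsLattice O L' → Submodule.span K L' = Submodule.span K L →
      L ⊆ L' → IsIntegral O Q L' → L' = L

/-- The lattice `L` is `n`-ADC: every integral `O`-lattice `N` of rank `n` (on a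
nondegenerate quadratic space `W` of dimension `n`) whose ambient space is represented by
the space `(V,Q) = K·L` is represented by `L`. -/
def IsADC (O : Subring K) {V : Type} [AddCommGroup V] [Module K V]
    (Q : QuadraticForm K V) (L : Set V) (n : ℕ) : Prop :=
  ∀ (W : Type) [AddCommGroup W] [Module K W] (Q' : QuadraticForm K W),
    Nondeg Q' → Module.finrank K W = n →
    ∀ N : Set W, IsLatticeOn O N → IsIntegral O Q' N →
      SpaceRep Q' Q → LatRep Q' Q N L

/-- The lattice `L` is `n`-universal: it represents every integral `O`-lattice of rank `n`. -/
def IsUniversal (O : Subring K) {V : Type} [AddCommGroup V] [Module K V]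
    (Q : QuadraticForm K V) (L : Set V) (n : ℕ) : Prop :=
  ∀ (W : Type) [AddCommGroup W] [Module K W] (Q' : QuadraticForm K W),
    Nondeg Q' → Module.finrank K W = n →
    ∀ N : Set W, IsLatticeOn O N → IsIntegral O Q' N → LatRep Q' Q N L

end QLat

/-
One direction is immediate, since maximal lattices are integral. Conversely, every
integral lattice `N` lies in a maximal lattice on the same space: an integral lattice containing
`N` is contained in the dual lattice `N^# = {x | B(x, N) ⊆ O}`, which embeds into
`Hom_O(N, O)` by nondegeneracy and is therefore noetherian, so the integral lattices between `N`
and `N^#` have a maximal member. A representation of that maximal lattice by `M` restricts to a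
representation of `N`.
-/

theorem Submodule.exists_maximal_of_le_isNoetherian {R M : Type*} [Ring R] [AddCommGroup M]
    [Module R M] {D : Submodule R M} [IsNoetherian R D] (Φ : Submodule R M → Prop)
    (hΦ : ∀ p, Φ p → p ≤ D) {P : Submodule R M} (hP : Φ P) : ∃ p, Maximal Φ p := by
  have map_comap {p} (hp : Φ p) : (p.comap D.subtype).map D.subtype = p := by
    rw [Submodule.map_comap_subtype, inf_eq_right.2 (hΦ p hp)]
  obtain ⟨q, -, hqΦ, hqmax⟩ := exists_maximal_ge_of_wellFoundedGT (Φ ∘ Submodule.map D.subtype)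
    (P.comap D.subtype) (by rwa [Function.comp_apply, map_comap hP])
  refine ⟨_, hqΦ, fun p hp hle => ?_⟩
  rw [← map_comap hp]
  refine Submodule.map_mono (hqmax (by rwa [Function.comp_apply, map_comap hp]) ?_)
  rwa [← Submodule.map_le_iff_le_comap]

namespace QLat

variable {K : Type} [Field K] (O : Subring K)

section Lattice

variable {V : Type} [AddCommGroup V] [Module K V]

theorem ospan_eq_span (s : Set V) : ospan O s = Submodule.span O s := by
  ext x
  rw [SetLike.mem_coe, Submodule.mem_span_set']
  constructor
  · rintro ⟨m, c, g, hc, hg, rfl⟩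
    exact ⟨m, fun i => ⟨c i, hc i⟩, fun i => ⟨g i, hg i⟩, rfl⟩
  · rintro ⟨m, c, g, rfl⟩
    exact ⟨m, fun i => c i, fun i => g i, fun i => (c i).2, fun i => (g i).2, rfl⟩

theorem isLattice_iff {L : Set V} : IsLattice O L ↔ ∃ P : Submodule O V, P.FG ∧ ↑P = L := by
  simp only [IsLattice, ospan_eq_span, Submodule.FG]
  constructor
  · rintro ⟨t, rfl⟩
    exact ⟨_, ⟨t, rfl⟩, rfl⟩
  · rintro ⟨P, ⟨t, rfl⟩, rfl⟩
    exact ⟨t, rfl⟩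

end Lattice

section Dual

open LinearMap.BilinForm QuadraticMap

variable {W : Type} [AddCommGroup W] [Module K W] {Q : QuadraticForm K W}

theorem nondegenerate_polarBilin (hQ : Nondeg Q) : (polarBilin Q).Nondegenerate :=
  (LinearMap.IsRefl.nondegenerate_iff_separatingLeft
    fun x _ h => by rwa [polarBilin_apply_apply, polar_comm]).2
    hQ

theorem polar_mem_of_isIntegral {p : Submodule O W} (hp : IsIntegral O Q p) {x y : W}
    (hx : x ∈ p) (hy : y ∈ p) : polar Q x y ∈ O :=
  O.sub_mem (O.sub_mem (hp _ (p.add_mem hx hy)) (hp x hx)) (hp y hy)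

theorem le_dualSubmodule_of_isIntegral {P p : Submodule O W} (hPp : P ≤ p)
    (hp : IsIntegral O Q p) : p ≤ dualSubmodule (polarBilin Q) P :=
  fun _ hx _ hy => Submodule.mem_one.2 ⟨⟨_, polar_mem_of_isIntegral O hp hx (hPp hy)⟩, rfl⟩

theorem isNoetherian_dualSubmodule [IsNoetherianRing O] (hQ : Nondeg Q)
    {P : Submodule O W} (hP : P.FG) (hPspan : Submodule.span K (P : Set W) = ⊤) :
    IsNoetherian O (dualSubmodule (polarBilin Q) P) :=
  have := Module.Finite.iff_fg.2 hP
  isNoetherian_of_injective _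
    (dualSubmoduleToDual_injective _ (nondegenerate_polarBilin hQ) P hPspan)

theorem exists_isMaximal_superset [IsNoetherianRing O] (hQ : Nondeg Q) {N : Set W}
    (hN : IsLatticeOn O N) (hNint : IsIntegral O Q N) :
    ∃ L : Set W, IsLatticeOn O L ∧ IsMaximal O Q L ∧ N ⊆ L := by
  obtain ⟨hNlat, hNspan⟩ := hN
  obtain ⟨P, hPfg, rfl⟩ := (isLattice_iff O).1 hNlat
  have := isNoetherian_dualSubmodule O hQ hPfg hNspan
  obtain ⟨p, ⟨hPp, hp⟩, hmax⟩ := Submodule.exists_maximal_of_le_isNoetherian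
    (fun p => P ≤ p ∧ IsIntegral O Q p) (fun p hp => le_dualSubmodule_of_isIntegral O hp.1 hp.2)
    ⟨le_rfl, hNint⟩
  have := isNoetherian_of_le (le_dualSubmodule_of_isIntegral O hPp hp)
  have hpfg : p.FG := Module.Finite.iff_fg.1 inferInstance
  have hpspan : Submodule.span K (p : Set W) = ⊤ := top_unique (hNspan ▸ Submodule.span_mono hPp)
  refine ⟨p, ⟨(isLattice_iff O).2 ⟨p, hpfg, rfl⟩, hpspan⟩, ⟨hp, ?_⟩, hPp⟩
  intro L hL _ hpL hLint
  obtain ⟨p', -, rfl⟩ := (isLattice_iff O).1 hL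
  exact congrArg _ (le_antisymm (hmax ⟨hPp.trans hpL, hLint⟩ hpL) hpL)

end Dual

end QLat

open QLat

theorem isADC_iff_represents_maximal_general
    {K : Type} [Field K] (O : ValuationSubring K)
    [IsDiscreteValuationRing O]
    {V : Type} [AddCommGroup V] [Module K V]
    (Q : QuadraticForm K V)
    (n : ℕ)
    (M : Set V) :
    IsADC O.toSubring Q M n ↔
      ∀ (W : Type) [AddCommGroup W] [Module K W] (Q' : QuadraticForm K W),
        Nondeg Q' → Module.finrank K W = n →
        ∀ N : Set W, IsLatticeOn O.toSubring N → IsMaximal O.toSubring Q' N →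
          SpaceRep Q' Q → LatRep Q' Q N M := by
  have : IsNoetherianRing O.toSubring := inferInstanceAs (IsNoetherianRing O)
  refine ⟨fun hADC W _ _ Q' hQ' hrk N hN hNmax => hADC W Q' hQ' hrk N hN hNmax.1, ?_⟩
  intro hmax W _ _ Q' hQ' hrk N hN hNint hrep
  obtain ⟨L, hL, hLmax, hNL⟩ := exists_isMaximal_superset O.toSubring hQ' hN hNint
  obtain ⟨σ, hσinj, hσQ, hσL⟩ := hmax W Q' hQ' hrk L hL hLmax hrep
  exact ⟨σ, hσinj, hσQ, (Set.image_mono hNL).trans hσL⟩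

/-- Let `F` be a non-archimedean local field of characteristic ≠ 2,
`n ≥ 1`, and `M` an integral `O_F`-lattice.  Then `M` is `n`-ADC if and only if for
every `O_F`-maximal lattice `N` of rank `n` such that `F·M` represents `F·N`, `M`
represents `N`. -/
theorem isADC_iff_represents_maximal
    {K : Type} [Field K] (O : ValuationSubring K)
    [IsDiscreteValuationRing O] [IsAdicComplete (IsLocalRing.maximalIdeal O) O]
    [Finite (IsLocalRing.ResidueField O)] (hK2 : (2 : K) ≠ 0)
    {V : Type} [AddCommGroup V] [Module K V]
    (Q : QuadraticForm K V) (hQ : Nondeg Q)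
    (n : ℕ) (hn : 1 ≤ n)
    (M : Set V) (hM : IsLatticeOn O.toSubring M) (hMint : IsIntegral O.toSubring Q M) :
    IsADC O.toSubring Q M n ↔
      ∀ (W : Type) [AddCommGroup W] [Module K W] (Q' : QuadraticForm K W),
        Nondeg Q' → Module.finrank K W = n →
        ∀ N : Set W, IsLatticeOn O.toSubring N → IsMaximal O.toSubring Q' N →
          SpaceRep Q' Q → LatRep Q' Q N M :=
  isADC_iff_represents_maximal_general O Q n M
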